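/- Under exchangeability A ⫫ (Y[0],Y[1]) | X and consistency, the representation-induced confounding bias decomposes as: E(Y[1]−Y[0] | Φ(X)=φ) − [E(Y | A=1, Φ(X)=φ) − E(Y | A=0, Φ(X)=φ)] = Σ_{a∈{0,1}} (−1)^{1−a} Σ_x μ_a(x) [P(X=x | Φ(X)=φ) − P(X=x | A=a, Φ(X)=φ)], where μ_a(x) = E(Y | A=a, X=x). -/

import Mathlib

open scoped Classical

/-! Consistency replaces `Y` by `Y_a` on `{A = a}`, and exchangeability then factors
`E[Y; A = a, X = x] · P(X = x) = P(A = a, X = x) · E[Y_a; X = x]`. Hence each summand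
`μ_a(x) (P(X = x) / P(φ) - P(A = a, X = x) / P(A = a, φ))` equals
`E[Y_a; X = x] / P(φ) - E[Y; A = a, X = x] / P(A = a, φ)` (both sides vanish on null atoms),
and summing over the fibre of `φ` gives `E(Y_a | φ) - E(Y | A = a, φ)`. The alternating sum over
`a` is then the bias. -/

/-- Probability of an event under a finite mass function on the sample space `Ω`. -/
noncomputable def pr {Ω : Type*} [Fintype Ω] (p : Ω → ℝ) (E : Ω → Prop) : ℝ :=
  ∑ ω, if E ω then p ω else 0

/-- Conditional expectation `E(Y | E)` under a finite mass function. -/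
noncomputable def cexp {Ω : Type*} [Fintype Ω] (p : Ω → ℝ) (Y : Ω → ℝ) (E : Ω → Prop) : ℝ :=
  (∑ ω, if E ω then p ω * Y ω else 0) / pr p E

noncomputable def expOn {Ω : Type*} [Fintype Ω] (p : Ω → ℝ) (Y : Ω → ℝ) (E : Ω → Prop) : ℝ :=
  ∑ ω, if E ω then p ω * Y ω else 0

section Finite

open Finset

variable {Ω : Type*} [Fintype Ω] {p : Ω → ℝ}

theorem cexp_eq_expOn_div (Y : Ω → ℝ) (E : Ω → Prop) : cexp p Y E = expOn p Y E / pr p E := rfl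

theorem pr_congr {E F : Ω → Prop} (h : ∀ ω, E ω ↔ F ω) : pr p E = pr p F := by
  simp only [pr, h]

theorem expOn_congr_fun {Y Z : Ω → ℝ} {E : Ω → Prop} (h : ∀ ω, E ω → Y ω = Z ω) :
    expOn p Y E = expOn p Z E :=
  sum_congr rfl fun ω _ => by by_cases hω : E ω <;> simp [hω, h]

theorem expOn_sub (Y Z : Ω → ℝ) (E : Ω → Prop) :
    expOn p (fun ω => Y ω - Z ω) E = expOn p Y E - expOn p Z E := by
  simp only [expOn, ← sum_sub_distrib]
  exact sum_congr rfl fun ω _ => by split_ifs <;> ring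

theorem cexp_sub (Y Z : Ω → ℝ) (E : Ω → Prop) :
    cexp p (fun ω => Y ω - Z ω) E = cexp p Y E - cexp p Z E := by
  simp only [cexp_eq_expOn_div, expOn_sub, sub_div]

theorem pr_nonneg (hp : ∀ ω, 0 ≤ p ω) (E : Ω → Prop) : 0 ≤ pr p E :=
  sum_nonneg fun ω _ => by split_ifs <;> simp [hp ω]

theorem pr_mono (hp : ∀ ω, 0 ≤ p ω) {E F : Ω → Prop} (h : ∀ ω, E ω → F ω) : pr p E ≤ pr p F :=
  sum_le_sum fun ω _ => by
    by_cases hE : E ω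
    · simp [hE, h ω hE]
    · split_ifs <;> simp [hp ω]

theorem expOn_eq_zero_of_pr_eq_zero (hp : ∀ ω, 0 ≤ p ω) {E : Ω → Prop} (h : pr p E = 0)
    (Y : Ω → ℝ) : expOn p Y E = 0 := by
  have hmass : ∀ ω, E ω → p ω = 0 := fun ω hω => by
    simpa [hω] using (sum_eq_zero_iff_of_nonneg
      fun ω _ => by split_ifs <;> simp [hp ω]).mp h ω (mem_univ ω)
  exact sum_eq_zero fun ω _ => by by_cases hω : E ω <;> simp [hω, hmass]

theorem expOn_and_comp_eq_sum_ite {𝒳 : Type*} [Fintype 𝒳] (X : Ω → 𝒳) (C : 𝒳 → Prop)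
    (E : Ω → Prop) (Y : Ω → ℝ) :
    expOn p Y (fun ω => E ω ∧ C (X ω))
      = ∑ x, if C x then expOn p Y (fun ω => E ω ∧ X ω = x) else 0 := by
  rw [expOn, ← sum_fiberwise univ X]
  refine sum_congr rfl fun x _ => ?_
  rw [sum_filter]
  split_ifs with hC
  · exact sum_congr rfl fun ω _ => by
      by_cases hX : X ω = x <;> by_cases hE : E ω <;> simp [hX, hE, hC]
  · exact sum_eq_zero fun ω _ => by
      by_cases hX : X ω = x <;> simp [hX, hC]

theorem expOn_comp_eq_sum_image {β : Type*} (V : Ω → β) (g : β → ℝ) (E : Ω → Prop) :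
    expOn p (fun ω => g (V ω)) E
      = ∑ v ∈ univ.image V, g v * pr p (fun ω => V ω = v ∧ E ω) := by
  rw [expOn, ← sum_fiberwise_of_maps_to (g := V) fun ω _ => mem_image_of_mem V (mem_univ ω)]
  refine sum_congr rfl fun v _ => ?_
  rw [pr, mul_sum, sum_filter]
  refine sum_congr rfl fun ω _ => ?_
  by_cases hV : V ω = v <;> by_cases hE : E ω <;> simp [hV, hE, mul_comm]

theorem expOn_comp_and_mul_pr_of_condIndep {β : Type*} (V : Ω → β) {E F : Ω → Prop}
    (hindep : ∀ v, pr p (fun ω => F ω ∧ V ω = v ∧ E ω) * pr p E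
      = pr p (fun ω => F ω ∧ E ω) * pr p (fun ω => V ω = v ∧ E ω)) (g : β → ℝ) :
    expOn p (fun ω => g (V ω)) (fun ω => F ω ∧ E ω) * pr p E
      = pr p (fun ω => F ω ∧ E ω) * expOn p (fun ω => g (V ω)) E := by
  rw [expOn_comp_eq_sum_image, expOn_comp_eq_sum_image, sum_mul, mul_sum]
  refine sum_congr rfl fun v _ => ?_
  rw [pr_congr (F := fun ω => F ω ∧ V ω = v ∧ E ω) fun ω => by tauto]
  linear_combination g v * hindep v

theorem ite_pos_cexp_mul_sub_eq (hp : ∀ ω, 0 ≤ p ω) {E F : Ω → Prop} {Y Ya : Ω → ℝ}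
    {c d : ℝ} (hc : c ≠ 0) (hd : d ≠ 0)
    (hfac : expOn p Y (fun ω => F ω ∧ E ω) * pr p E = pr p (fun ω => F ω ∧ E ω) * expOn p Ya E)
    (hoverlap : 0 < pr p E → 0 < pr p (fun ω => F ω ∧ E ω)) :
    (if 0 < pr p E then
        cexp p Y (fun ω => F ω ∧ E ω) * (pr p E / c - pr p (fun ω => F ω ∧ E ω) / d)
      else 0)
      = expOn p Ya E / c - expOn p Y (fun ω => F ω ∧ E ω) / d := by
  split_ifs with hE
  · have hFE := (hoverlap hE).ne'
    rw [cexp_eq_expOn_div]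
    field_simp
    linear_combination d * hfac
  · have hE0 : pr p E = 0 := le_antisymm (not_lt.mp hE) (pr_nonneg hp E)
    have hFE0 : pr p (fun ω => F ω ∧ E ω) = 0 :=
      le_antisymm (hE0 ▸ pr_mono hp fun ω h => h.2) (pr_nonneg hp _)
    simp [expOn_eq_zero_of_pr_eq_zero hp hE0, expOn_eq_zero_of_pr_eq_zero hp hFE0]

theorem sum_fiber_cexp_mul_sub_eq {𝒳 𝒵 : Type*} [Fintype 𝒳] (hp : ∀ ω, 0 ≤ p ω)
    (X : Ω → 𝒳) (Φ : 𝒳 → 𝒵) (φ : 𝒵) (F : Ω → Prop) {Y Ya : Ω → ℝ}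
    (hfac : ∀ x, expOn p Y (fun ω => F ω ∧ X ω = x) * pr p (fun ω => X ω = x)
      = pr p (fun ω => F ω ∧ X ω = x) * expOn p Ya (fun ω => X ω = x))
    (hoverlap : ∀ x, 0 < pr p (fun ω => X ω = x) → 0 < pr p (fun ω => F ω ∧ X ω = x))
    (hFφ : 0 < pr p (fun ω => F ω ∧ Φ (X ω) = φ)) :
    (∑ x, if Φ x = φ ∧ 0 < pr p (fun ω => X ω = x) then
        cexp p Y (fun ω => F ω ∧ X ω = x) *
          (pr p (fun ω => X ω = x) / pr p (fun ω => Φ (X ω) = φ)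
            - pr p (fun ω => F ω ∧ X ω = x) / pr p (fun ω => F ω ∧ Φ (X ω) = φ))
      else 0)
      = cexp p Ya (fun ω => Φ (X ω) = φ) - cexp p Y (fun ω => F ω ∧ Φ (X ω) = φ) := by
  have hφ : 0 < pr p (fun ω => Φ (X ω) = φ) := hFφ.trans_le (pr_mono hp fun ω h => h.2)
  have hYa := expOn_and_comp_eq_sum_ite (p := p) X (fun x => Φ x = φ) (fun _ => True) Ya
  simp only [true_and] at hYa
  simp only [ite_and, ite_pos_cexp_mul_sub_eq hp hφ.ne' hFφ.ne' (hfac _) (hoverlap _)]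
  rw [cexp_eq_expOn_div, cexp_eq_expOn_div, hYa, expOn_and_comp_eq_sum_ite X (fun x => Φ x = φ),
    sum_div, sum_div, ← sum_sub_distrib]
  exact sum_congr rfl fun x _ => by split_ifs <;> simp

end Finite

theorem ricb_decomposition_general
    {Ω 𝒳 𝒵 : Type*} [Fintype Ω] [Fintype 𝒳]
    (p : Ω → ℝ) (hp : ∀ ω, 0 ≤ p ω)
    (X : Ω → 𝒳) (A : Ω → ℕ)
    (Y0 Y1 Y : Ω → ℝ) (Φ : 𝒳 → 𝒵)
    (hexch : ∀ (x : 𝒳) (a : ℕ) (y0 y1 : ℝ),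
      pr p (fun ω => A ω = a ∧ Y0 ω = y0 ∧ Y1 ω = y1 ∧ X ω = x) * pr p (fun ω => X ω = x)
        = pr p (fun ω => A ω = a ∧ X ω = x) *
          pr p (fun ω => Y0 ω = y0 ∧ Y1 ω = y1 ∧ X ω = x))
    (hcons : ∀ ω, Y ω = if A ω = 1 then Y1 ω else Y0 ω)
    (hoverlap : ∀ x : 𝒳, 0 < pr p (fun ω => X ω = x) →
      0 < pr p (fun ω => A ω = 1 ∧ X ω = x) ∧ 0 < pr p (fun ω => A ω = 0 ∧ X ω = x))
    (φ : 𝒵)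
    (hφ1 : 0 < pr p (fun ω => A ω = 1 ∧ Φ (X ω) = φ))
    (hφ0 : 0 < pr p (fun ω => A ω = 0 ∧ Φ (X ω) = φ)) :
    cexp p (fun ω => Y1 ω - Y0 ω) (fun ω => Φ (X ω) = φ)
        - (cexp p Y (fun ω => A ω = 1 ∧ Φ (X ω) = φ)
            - cexp p Y (fun ω => A ω = 0 ∧ Φ (X ω) = φ))
      = ∑ a ∈ Finset.range 2, (-1 : ℝ) ^ (1 - a) *
          ∑ x : 𝒳, if Φ x = φ ∧ 0 < pr p (fun ω => X ω = x) then
              cexp p Y (fun ω => A ω = a ∧ X ω = x) *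
                (pr p (fun ω => X ω = x) / pr p (fun ω => Φ (X ω) = φ)
                  - pr p (fun ω => A ω = a ∧ X ω = x)
                      / pr p (fun ω => A ω = a ∧ Φ (X ω) = φ))
            else 0 := by
  have hfac (a : ℕ) (g : ℝ × ℝ → ℝ) (x : 𝒳) :=
    expOn_comp_and_mul_pr_of_condIndep (p := p) (fun ω => (Y0 ω, Y1 ω))
      (E := fun ω => X ω = x) (F := fun ω => A ω = a) (fun v => by
        simpa only [Prod.ext_iff, and_assoc] using hexch x a v.1 v.2) g
  have hfac1 (x : 𝒳) : expOn p Y (fun ω => A ω = 1 ∧ X ω = x) * pr p (fun ω => X ω = x)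
      = pr p (fun ω => A ω = 1 ∧ X ω = x) * expOn p Y1 (fun ω => X ω = x) := by
    rw [expOn_congr_fun fun ω h => (hcons ω).trans (if_pos h.1)]
    exact hfac 1 Prod.snd x
  have hfac0 (x : 𝒳) : expOn p Y (fun ω => A ω = 0 ∧ X ω = x) * pr p (fun ω => X ω = x)
      = pr p (fun ω => A ω = 0 ∧ X ω = x) * expOn p Y0 (fun ω => X ω = x) := by
    rw [expOn_congr_fun fun ω h => (hcons ω).trans (if_neg (by simp [h.1]))]
    exact hfac 0 Prod.fst x
  rw [Finset.sum_range_succ, Finset.sum_range_one,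
    sum_fiber_cexp_mul_sub_eq hp X Φ φ (fun ω => A ω = 0) hfac0
      (fun x hx => (hoverlap x hx).2) hφ0,
    sum_fiber_cexp_mul_sub_eq hp X Φ φ (fun ω => A ω = 1) hfac1
      (fun x hx => (hoverlap x hx).1) hφ1,
    cexp_sub]
  ring

/-- Under exchangeability `A ⫫ (Y[0],Y[1]) | X` and consistency, the representation-induced
confounding bias decomposes as
`E(Y[1]−Y[0] | Φ(X)=φ) − [E(Y | A=1, Φ(X)=φ) − E(Y | A=0, Φ(X)=φ)]
  = Σ_{a∈{0,1}} (−1)^{1−a} Σ_x μ_a(x) [P(X=x | Φ(X)=φ) − P(X=x | A=a, Φ(X)=φ)]`,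
where `μ_a(x) = E(Y | A=a, X=x)` and the sum over `x` ranges over the fiber of `φ`. -/
theorem ricb_decomposition
    {Ω 𝒳 𝒵 : Type*} [Fintype Ω] [Fintype 𝒳]
    (p : Ω → ℝ) (hp : ∀ ω, 0 ≤ p ω) (hsum : ∑ ω, p ω = 1)
    (X : Ω → 𝒳) (A : Ω → ℕ) (hA : ∀ ω, A ω ≤ 1)
    (Y0 Y1 Y : Ω → ℝ) (Φ : 𝒳 → 𝒵)
    (hexch : ∀ (x : 𝒳) (a : ℕ) (y0 y1 : ℝ),
      pr p (fun ω => A ω = a ∧ Y0 ω = y0 ∧ Y1 ω = y1 ∧ X ω = x) * pr p (fun ω => X ω = x)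
        = pr p (fun ω => A ω = a ∧ X ω = x) *
          pr p (fun ω => Y0 ω = y0 ∧ Y1 ω = y1 ∧ X ω = x))
    (hcons : ∀ ω, Y ω = if A ω = 1 then Y1 ω else Y0 ω)
    (hoverlap : ∀ x : 𝒳, 0 < pr p (fun ω => X ω = x) →
      0 < pr p (fun ω => A ω = 1 ∧ X ω = x) ∧ 0 < pr p (fun ω => A ω = 0 ∧ X ω = x))
    (φ : 𝒵)
    (hφ1 : 0 < pr p (fun ω => A ω = 1 ∧ Φ (X ω) = φ))
    (hφ0 : 0 < pr p (fun ω => A ω = 0 ∧ Φ (X ω) = φ)) :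
    cexp p (fun ω => Y1 ω - Y0 ω) (fun ω => Φ (X ω) = φ)
        - (cexp p Y (fun ω => A ω = 1 ∧ Φ (X ω) = φ)
            - cexp p Y (fun ω => A ω = 0 ∧ Φ (X ω) = φ))
      = ∑ a ∈ Finset.range 2, (-1 : ℝ) ^ (1 - a) *
          ∑ x : 𝒳, if Φ x = φ ∧ 0 < pr p (fun ω => X ω = x) then
              cexp p Y (fun ω => A ω = a ∧ X ω = x) *
                (pr p (fun ω => X ω = x) / pr p (fun ω => Φ (X ω) = φ)
                  - pr p (fun ω => A ω = a ∧ X ω = x)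
                      / pr p (fun ω => A ω = a ∧ Φ (X ω) = φ))
            else 0 :=
  ricb_decomposition_general p hp X A Y0 Y1 Y Φ hexch hcons hoverlap φ hφ1 hφ0
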